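/- Entry bound for R·B₁·R·B₂·R (second-derivative resolvent estimate). Fix d, N_b ≥ 1 and 𝔪, c₁ > 0. There exists C > 0, depending only on d, N_b, 𝔪, c₁, such that the following holds. Let Λ be a countable set, y : Λ → ℝ^d 𝔪-separated, m₁, m₂ ∈ Λ, and let 𝔡, γ, γ₁ > 0. Let R, B₁, B₂ be bounded operators on ℓ²(Λ × {1,…,N_b}) whose matrix entries satisfy |R^{ab}_{ℓk}| ≤ (2/𝔡) e^{−γ r_{ℓk}} and, for i = 1,2, |（B_i)^{ab}_{ℓk}| ≤ c₁ e^{−γ₁ (r_{ℓ m_i} + r_{m_i k})} for all ℓ,k,a,b. Then, with η := min{γ, γ₁}, for all ℓ ∈ Λ and 1 ≤ a ≤ N_b: |(R B₁ R B₂ R)^{aa}_{ℓℓ}| ≤ C 𝔡^{−3} (1 + η^{−8d}) e^{−(η/4)(r_{ℓ m₁} + r_{ℓ m₂})}. -/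

import Mathlib

/-!
Every factor has exponentially decaying entries: `R` away from the diagonal, `B_i` away from the
anchor `m_i`. In one matrix product the triangle inequality splits the exponent,
`t r(x,p) + s r(p,z) ≥ s r(x,z) + (t - s) r(x,p)`, so summing over the middle index costs only
`M = sup_x Σ_p e^{-(η/2) r(x,p)}`. A volume-packing count puts at most `(1 + 2t/𝔪)^d` points of an
`𝔪`-separated set in a ball of radius `t`; summing over unit shells and comparing with
`Σ_n C(n+d,d) q^n = (1-q)^{-(d+1)}` gives `M ≲ (1 + 2/η)^{d+1}`. Four products give
`M^4 ≲ η^{-4(d+1)}`, and `4(d+1) ≤ 8d` once `d ≥ 1`.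
-/

/-- Matrix entry `T^{ab}_{ℓk} = ⟨δ_{(ℓ,a)}, T δ_{(k,b)}⟩` of a bounded operator on `ℓ²(ι)`. -/
noncomputable def entry {ι : Type*} [DecidableEq ι]
    (T : lp (fun _ : ι => ℂ) 2 →L[ℂ] lp (fun _ : ι => ℂ) 2) (i j : ι) : ℂ :=
  inner ℂ (lp.single 2 i (1 : ℂ)) (T (lp.single 2 j (1 : ℂ)))

open Finset Metric MeasureTheory Module Real
open scoped Nat

lemma sum_add_one_pow_mul_pow_le (d : ℕ) {q : ℝ} (hq0 : 0 ≤ q) (hq1 : q < 1) (G : Finset ℕ) :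
    ∑ n ∈ G, ((n : ℝ) + 1) ^ d * q ^ n ≤ d ! * (1 - q)⁻¹ ^ (d + 1) := by
  have hq : ‖q‖ < 1 := by rwa [norm_of_nonneg hq0]
  have hchoose := hasSum_choose_mul_geometric_of_norm_lt_one d hq
  have hterm : ∀ n : ℕ, ((n : ℝ) + 1) ^ d ≤ d ! * (n + d).choose d := fun n => by
    have := Nat.pow_sub_le_descFactorial (n + d) d
    rw [Nat.descFactorial_eq_factorial_mul_choose, show n + d + 1 - d = n + 1 by omega] at this
    exact_mod_cast this
  calc ∑ n ∈ G, ((n : ℝ) + 1) ^ d * q ^ n ≤ ∑ n ∈ G, d ! * ((n + d).choose d * q ^ n) :=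
        sum_le_sum fun n _ => by rw [← mul_assoc]; gcongr; exact hterm n
    _ = d ! * ∑ n ∈ G, (n + d).choose d * q ^ n := (mul_sum ..).symm
    _ ≤ d ! * (1 / (1 - q) ^ (d + 1)) := by
        gcongr
        exact sum_le_hasSum G (fun n _ => by positivity) hchoose
    _ = d ! * (1 - q)⁻¹ ^ (d + 1) := by rw [one_div, inv_pow]

lemma inv_one_sub_exp_neg_le {s : ℝ} (hs : 0 < s) : (1 - exp (-s))⁻¹ ≤ 1 + s⁻¹ := by
  have h : exp (-s) ≤ (1 + s)⁻¹ := by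
    rw [exp_neg]; exact inv_anti₀ (by positivity) (by linarith [Real.add_one_le_exp s])
  calc (1 - exp (-s))⁻¹ ≤ (1 - (1 + s)⁻¹)⁻¹ :=
        inv_anti₀ (by rw [sub_pos, inv_lt_one₀ (by positivity)]; linarith) (by linarith)
    _ = 1 + s⁻¹ := by
        rw [show 1 - (1 + s)⁻¹ = s / (1 + s) by field_simp; ring, inv_div, add_div,
          div_self hs.ne', one_div, add_comm]

lemma sum_exp_neg_mul_le_of_card_le {ι : Type*} {r : ι → ℝ} (hr : ∀ k, 0 ≤ r k) {A : ℝ} {d : ℕ}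
    (hcard : ∀ t : ℝ, 1 ≤ t → ∀ F : Finset ι, (∀ k ∈ F, r k ≤ t) → (#F : ℝ) ≤ A * t ^ d)
    {s : ℝ} (hs : 0 < s) (F : Finset ι) :
    ∑ k ∈ F, exp (-s * r k) ≤ A * d ! * (1 + s⁻¹) ^ (d + 1) := by
  classical
  have hA : 0 ≤ A := by simpa using hcard 1 le_rfl ∅ (by simp)
  have hq : exp (-s) < 1 := exp_lt_one_iff.2 (neg_lt_zero.2 hs)
  set ν : ι → ℕ := fun k => ⌊r k⌋₊
  have hfiber : ∀ n : ℕ, (#(F.filter (ν · = n)) : ℝ) ≤ A * ((n : ℝ) + 1) ^ d := fun n =>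
    hcard _ (by linarith [n.cast_nonneg (α := ℝ)]) _ fun k hk =>
      (mem_filter.1 hk).2 ▸ (Nat.lt_floor_add_one (r k)).le
  calc ∑ k ∈ F, exp (-s * r k) ≤ ∑ k ∈ F, exp (-s) ^ ν k := sum_le_sum fun k _ => by
        rw [← exp_nat_mul]; exact exp_le_exp.2 (by nlinarith [Nat.floor_le (hr k)])
    _ = ∑ n ∈ F.image ν, #(F.filter (ν · = n)) * exp (-s) ^ n := by
        rw [sum_comp]; simp only [nsmul_eq_mul]
    _ ≤ ∑ n ∈ F.image ν, A * (((n : ℝ) + 1) ^ d * exp (-s) ^ n) := sum_le_sum fun n _ => by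
        rw [← mul_assoc]; gcongr; exact hfiber n
    _ ≤ A * (d ! * (1 - exp (-s))⁻¹ ^ (d + 1)) := by
        rw [← mul_sum]; gcongr
        exact sum_add_one_pow_mul_pow_le d (exp_pos _).le hq _
    _ ≤ A * (d ! * (1 + s⁻¹) ^ (d + 1)) := by
        have : 0 ≤ (1 - exp (-s))⁻¹ := inv_nonneg.2 (by linarith)
        gcongr; exact inv_one_sub_exp_neg_le hs
    _ = A * d ! * (1 + s⁻¹) ^ (d + 1) := by ring

section Packing

variable {E : Type*} [NormedAddCommGroup E] [NormedSpace ℝ E] [FiniteDimensional ℝ E]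
  [MeasurableSpace E] [BorelSpace E]

lemma card_le_of_separated {Λ : Type*} {y : Λ → E} {𝔪 : ℝ} (h𝔪 : 0 < 𝔪)
    (hsep : ∀ ℓ k, ℓ ≠ k → 𝔪 ≤ dist (y ℓ) (y k)) (x : E) {t : ℝ} (ht : 0 ≤ t) (F : Finset Λ)
    (hF : ∀ k ∈ F, dist x (y k) ≤ t) :
    (#F : ℝ) ≤ (1 + 2 * t / 𝔪) ^ finrank ℝ E := by
  set μ : Measure E := Measure.addHaar
  set V := μ.real (ball 0 1)
  have hV : 0 < V := ENNReal.toReal_pos (measure_ball_pos μ _ one_pos).ne' measure_ball_lt_top.ne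
  have hball : ∀ z {r : ℝ}, 0 < r → μ.real (ball z r) = r ^ finrank ℝ E * V := fun z r hr => by
    simp [measureReal_def, μ.addHaar_ball_of_pos z hr, V, hr.le]
  have hdisj : (F : Set Λ).PairwiseDisjoint fun k => ball (y k) (𝔪 / 2) := fun ℓ _ k _ hℓk =>
    ball_disjoint_ball (by linarith [hsep ℓ k hℓk])
  have hsub : ⋃ k ∈ F, ball (y k) (𝔪 / 2) ⊆ ball x (t + 𝔪 / 2) :=
    Set.iUnion₂_subset fun k hk z hz => by
      rw [mem_ball] at hz ⊢
      linarith [dist_triangle z (y k) x, dist_comm x (y k), hF k hk]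
  have hvol : #F * (𝔪 / 2) ^ finrank ℝ E * V ≤ (t + 𝔪 / 2) ^ finrank ℝ E * V := calc
    #F * (𝔪 / 2) ^ finrank ℝ E * V = ∑ k ∈ F, μ.real (ball (y k) (𝔪 / 2)) := by
      simp [hball _ (half_pos h𝔪), mul_assoc]
    _ = μ.real (⋃ k ∈ F, ball (y k) (𝔪 / 2)) :=
      (measureReal_biUnion_finset hdisj fun _ _ => measurableSet_ball).symm
    _ ≤ μ.real (ball x (t + 𝔪 / 2)) := measureReal_mono hsub
    _ = (t + 𝔪 / 2) ^ finrank ℝ E * V := hball x (by positivity)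
  have h1 : 1 + 2 * t / 𝔪 = (t + 𝔪 / 2) / (𝔪 / 2) := by field_simp; ring
  rw [h1, div_pow, le_div_iff₀ (by positivity)]
  exact le_of_mul_le_mul_right hvol hV

lemma card_prod_le_of_separated {Λ : Type*} {N : ℕ} {y : Λ → E} {𝔪 : ℝ} (h𝔪 : 0 < 𝔪)
    (hsep : ∀ ℓ k, ℓ ≠ k → 𝔪 ≤ dist (y ℓ) (y k)) (x : E) {t : ℝ} (ht : 0 ≤ t)
    (F : Finset (Λ × Fin N)) (hF : ∀ p ∈ F, dist x (y p.1) ≤ t) :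
    (#F : ℝ) ≤ N * (1 + 2 * t / 𝔪) ^ finrank ℝ E := by
  classical
  have hsub : F ⊆ F.image Prod.fst ×ˢ univ := fun p hp =>
    mem_product.2 ⟨mem_image_of_mem _ hp, mem_univ _⟩
  have hcard : #F ≤ #(F.image Prod.fst) * N := by simpa using card_le_card hsub
  calc (#F : ℝ) ≤ #(F.image Prod.fst) * N := by exact_mod_cast hcard
    _ ≤ (1 + 2 * t / 𝔪) ^ finrank ℝ E * N := by
      gcongr
      exact card_le_of_separated h𝔪 hsep x ht _ (by simpa using fun a b h => hF (a, b) h)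
    _ = _ := mul_comm _ _

lemma sum_exp_neg_dist_le_of_separated {Λ : Type*} {N : ℕ} {y : Λ → E} {𝔪 : ℝ} (h𝔪 : 0 < 𝔪)
    (hsep : ∀ ℓ k, ℓ ≠ k → 𝔪 ≤ dist (y ℓ) (y k)) (x : E) {s : ℝ} (hs : 0 < s)
    (F : Finset (Λ × Fin N)) :
    ∑ p ∈ F, exp (-s * dist x (y p.1)) ≤
      N * (1 + 2 / 𝔪) ^ finrank ℝ E * (finrank ℝ E)! * (1 + s⁻¹) ^ (finrank ℝ E + 1) := by
  refine sum_exp_neg_mul_le_of_card_le (fun _ => dist_nonneg) (fun t ht F hF => ?_) hs F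
  refine (card_prod_le_of_separated h𝔪 hsep x (by linarith) F hF).trans ?_
  rw [mul_assoc, ← mul_pow]
  gcongr
  rw [add_mul, one_mul, mul_div_right_comm]
  linarith

end Packing

section Entries

variable {ι : Type*} [DecidableEq ι]

lemma entry_eq_apply (T : lp (fun _ : ι => ℂ) 2 →L[ℂ] lp (fun _ : ι => ℂ) 2) (i j : ι) :
    entry T i j = T (lp.single 2 j 1) i := by
  simp [entry, lp.inner_single_left]

lemma hasSum_entry_comp (T S : lp (fun _ : ι => ℂ) 2 →L[ℂ] lp (fun _ : ι => ℂ) 2) (i j : ι) :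
    HasSum (fun k => entry T i k * entry S k j) (entry (T ∘L S) i j) := by
  set L := (innerSL ℂ (lp.single 2 i (1 : ℂ))).comp T
  have h := (lp.hasSum_single ENNReal.ofNat_ne_top (S (lp.single 2 j 1))).mapL L
  have hterm : (fun k => entry T i k * entry S k j)
      = fun k => L (lp.single 2 k (S (lp.single 2 j 1) k)) := by
    funext k
    have hsingle : lp.single 2 k (S (lp.single 2 j 1) k)
        = S (lp.single 2 j 1) k • lp.single (E := fun _ : ι => ℂ) 2 k 1 := by
      rw [← lp.single_smul, smul_eq_mul, mul_one]
    rw [hsingle, map_smul, entry_eq_apply S, mul_comm]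
    rfl
  rw [hterm]
  exact h

variable {X : Type*} [PseudoMetricSpace X]

lemma norm_entry_comp_le (y : ι → X) {T S : lp (fun _ : ι => ℂ) 2 →L[ℂ] lp (fun _ : ι => ℂ) 2}
    {i j : ι} {x z : X} {a b s s' t u M : ℝ} (hs : 0 ≤ s) (hsut : s + u ≤ t) (hss' : s ≤ s')
    (hM : ∀ F : Finset ι, ∑ k ∈ F, exp (-u * dist x (y k)) ≤ M)
    (hT : ∀ k, ‖entry T i k‖ ≤ a * exp (-t * dist x (y k)))
    (hS : ∀ k, ‖entry S k j‖ ≤ b * exp (-s' * dist (y k) z)) :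
    ‖entry (T ∘L S) i j‖ ≤ a * b * M * exp (-s * dist x z) := by
  have ha : 0 ≤ a := nonneg_of_mul_nonneg_left ((norm_nonneg _).trans (hT i)) (exp_pos _)
  have hb : 0 ≤ b := nonneg_of_mul_nonneg_left ((norm_nonneg _).trans (hS j)) (exp_pos _)
  have hw : Summable fun k => exp (-u * dist x (y k)) :=
    summable_of_sum_le (fun k => (exp_pos _).le) hM
  have hterm : ∀ k, ‖entry T i k * entry S k j‖
      ≤ a * b * exp (-s * dist x z) * exp (-u * dist x (y k)) := by
    intro k
    have htri : s * dist x z ≤ s * dist x (y k) + s * dist (y k) z := by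
      rw [← mul_add]; exact mul_le_mul_of_nonneg_left (dist_triangle _ _ _) hs
    have h1 := mul_le_mul_of_nonneg_right hsut (dist_nonneg : 0 ≤ dist x (y k))
    have h2 := mul_le_mul_of_nonneg_right hss' (dist_nonneg : 0 ≤ dist (y k) z)
    calc ‖entry T i k * entry S k j‖
        ≤ a * exp (-t * dist x (y k)) * (b * exp (-s' * dist (y k) z)) := by
          rw [norm_mul]; exact mul_le_mul (hT k) (hS k) (norm_nonneg _) (by positivity)
      _ = a * b * exp (-t * dist x (y k) + -s' * dist (y k) z) := by rw [exp_add]; ring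
      _ ≤ a * b * exp (-s * dist x z + -u * dist x (y k)) := by gcongr a * b * exp ?_; linarith
      _ = _ := by rw [exp_add]; ring
  rw [← (hasSum_entry_comp T S i j).tsum_eq]
  calc ‖∑' k, entry T i k * entry S k j‖
        ≤ a * b * exp (-s * dist x z) * ∑' k, exp (-u * dist x (y k)) :=
        tsum_of_norm_bounded (hw.hasSum.mul_left _) hterm
    _ ≤ a * b * exp (-s * dist x z) * M := by
        gcongr; exact hw.tsum_le_of_sum_le hM
    _ = _ := by ring

lemma norm_entry_RBRBR_le (y : ι → X) {R B₁ B₂ : lp (fun _ : ι => ℂ) 2 →L[ℂ] lp (fun _ : ι => ℂ) 2}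
    {x₁ x₂ : X} {ρ c γ γ₁ η M : ℝ} (hη : 0 ≤ η) (hγ : η ≤ γ) (hγ₁ : η ≤ γ₁)
    (hM : ∀ x (F : Finset ι), ∑ k ∈ F, exp (-(η / 2) * dist x (y k)) ≤ M)
    (hR : ∀ i k, ‖entry R i k‖ ≤ ρ * exp (-γ * dist (y i) (y k)))
    (hB₁ : ∀ i k, ‖entry B₁ i k‖ ≤ c * exp (-γ₁ * (dist (y i) x₁ + dist x₁ (y k))))
    (hB₂ : ∀ i k, ‖entry B₂ i k‖ ≤ c * exp (-γ₁ * (dist (y i) x₂ + dist x₂ (y k))))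
    (i : ι) :
    ‖entry (R ∘L B₁ ∘L R ∘L B₂ ∘L R) i i‖ ≤
      c ^ 2 * ρ ^ 3 * M ^ 4 * exp (-(η / 2) * (dist (y i) x₁ + dist (y i) x₂)) := by
  have hs : 0 ≤ η / 2 := by positivity
  have hsγ : η / 2 + η / 2 ≤ γ := by linarith
  have hsγ₁ : η / 2 + η / 2 ≤ γ₁ := by linarith
  have hρ : 0 ≤ ρ := nonneg_of_mul_nonneg_left ((norm_nonneg _).trans (hR i i)) (exp_pos _)
  have hsplit : ∀ {B : lp (fun _ : ι => ℂ) 2 →L[ℂ] lp (fun _ : ι => ℂ) 2} {x},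
      (∀ i k, ‖entry B i k‖ ≤ c * exp (-γ₁ * (dist (y i) x + dist x (y k)))) →
      ∀ i k, ‖entry B i k‖ ≤ c * exp (-γ₁ * dist (y i) x) * exp (-γ₁ * dist x (y k)) :=
    fun hB i k => (hB i k).trans_eq (by rw [mul_add, exp_add, mul_assoc])
  have h₁ : ∀ k j, ‖entry (B₂ ∘L R) k j‖ ≤
      c * ρ * M * exp (-(η / 2) * dist x₂ (y j)) * exp (-γ₁ * dist (y k) x₂) := fun k j =>
    (norm_entry_comp_le y hs hsγ₁ (by linarith) (hM x₂) (hsplit hB₂ k) (hR · j)).trans_eq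
      (by ring)
  have h₂ : ∀ i j, ‖entry (R ∘L B₂ ∘L R) i j‖ ≤
      c * ρ ^ 2 * M ^ 2 * exp (-(η / 2) * dist x₂ (y j)) * exp (-(η / 2) * dist (y i) x₂) :=
    fun i j => (norm_entry_comp_le y hs hsγ (by linarith) (hM (y i)) (hR i) (h₁ · j)).trans_eq
      (by ring)
  have h₃ : ∀ i j, ‖entry (B₁ ∘L R ∘L B₂ ∘L R) i j‖ ≤
      c ^ 2 * ρ ^ 2 * M ^ 3 * exp (-(η / 2) * dist x₂ (y j)) * exp (-(η / 2) * dist x₁ x₂)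
        * exp (-γ₁ * dist (y i) x₁) := fun i j =>
    (norm_entry_comp_le y hs hsγ₁ le_rfl (hM x₁) (hsplit hB₁ i) (h₂ · j)).trans_eq (by ring)
  calc ‖entry (R ∘L B₁ ∘L R ∘L B₂ ∘L R) i i‖
      ≤ c ^ 2 * ρ ^ 3 * M ^ 4 * exp (-(η / 2) * dist x₂ (y i) + -(η / 2) * dist x₁ x₂
          + -(η / 2) * dist (y i) x₁) :=
        (norm_entry_comp_le y hs hsγ (by linarith) (hM (y i)) (hR i) (h₃ · i)).trans_eq
          (by rw [exp_add, exp_add]; ring)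
    _ ≤ c ^ 2 * ρ ^ 3 * M ^ 4 * exp (-(η / 2) * (dist (y i) x₁ + dist (y i) x₂)) := by
        have := mul_nonneg hs (dist_nonneg : 0 ≤ dist x₁ x₂)
        gcongr c ^ 2 * ρ ^ 3 * M ^ 4 * exp ?_
        rw [dist_comm x₂]
        linarith

end Entries

lemma one_add_pow_le_two_pow_mul {v : ℝ} (hv : 0 ≤ v) {n m : ℕ} (hnm : n ≤ m) :
    (1 + v) ^ n ≤ 2 ^ n * (1 + v ^ m) := by
  rcases le_total v 1 with h | h
  · calc (1 + v) ^ n ≤ 2 ^ n := pow_le_pow_left₀ (by positivity) (by linarith) n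
      _ ≤ 2 ^ n * (1 + v ^ m) := le_mul_of_one_le_right (by positivity) (by simp [pow_nonneg hv])
  · calc (1 + v) ^ n ≤ (2 * v) ^ n := pow_le_pow_left₀ (by positivity) (by linarith) n
      _ = 2 ^ n * v ^ n := mul_pow ..
      _ ≤ 2 ^ n * (1 + v ^ m) := by gcongr; linarith [pow_le_pow_right₀ h hnm]

lemma one_add_inv_half_pow_le {η : ℝ} (hη : 0 < η) {d : ℕ} (hd : 1 ≤ d) :
    ((1 + (η / 2)⁻¹) ^ (d + 1)) ^ 4 ≤ 2 ^ (8 * (d + 1)) * (1 + η⁻¹ ^ (8 * d)) := by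
  have hv : 0 ≤ η⁻¹ := by positivity
  calc ((1 + (η / 2)⁻¹) ^ (d + 1)) ^ 4 = (1 + 2 * η⁻¹) ^ (4 * (d + 1)) := by
        rw [← pow_mul, inv_div, div_eq_mul_inv, mul_comm (d + 1)]
    _ ≤ (2 * (1 + η⁻¹)) ^ (4 * (d + 1)) := by gcongr; linarith
    _ = 2 ^ (4 * (d + 1)) * (1 + η⁻¹) ^ (4 * (d + 1)) := mul_pow ..
    _ ≤ 2 ^ (4 * (d + 1)) * (2 ^ (4 * (d + 1)) * (1 + η⁻¹ ^ (8 * d))) := by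
        gcongr; exact one_add_pow_le_two_pow_mul hv (by omega)
    _ = 2 ^ (8 * (d + 1)) * (1 + η⁻¹ ^ (8 * d)) := by ring

/-- Entry bound for `R·B₁·R·B₂·R` (second-derivative resolvent estimate):
with `|R^{ab}_{ℓk}| ≤ (2/𝔡)e^{−γ r_{ℓk}}` and `|(B_i)^{ab}_{ℓk}| ≤ c₁ e^{−γ₁(r_{ℓm_i}+r_{m_ik})}`,
and `η = min{γ,γ₁}`:
`|(RB₁RB₂R)^{aa}_{ℓℓ}| ≤ C 𝔡^{−3}(1+η^{−8d}) e^{−(η/4)(r_{ℓm₁}+r_{ℓm₂})}`, with `C` depending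
only on `d, N_b, 𝔪, c₁`. -/
theorem stmt7 (d Nb : ℕ) (hd : 1 ≤ d) (hNb : 1 ≤ Nb) (𝔪 c₁ : ℝ)
    (h𝔪 : 0 < 𝔪) (hc₁ : 0 < c₁) :
    ∃ C : ℝ, 0 < C ∧
      ∀ (Λ : Type) [Countable Λ] [DecidableEq Λ]
        (y : Λ → EuclideanSpace ℝ (Fin d)),
        (∀ ℓ k : Λ, ℓ ≠ k → 𝔪 ≤ dist (y ℓ) (y k)) →
        ∀ (m₁ m₂ : Λ) (𝔡 γ γ₁ : ℝ), 0 < 𝔡 → 0 < γ → 0 < γ₁ →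
          ∀ R B₁ B₂ : lp (fun _ : Λ × Fin Nb => ℂ) 2 →L[ℂ] lp (fun _ : Λ × Fin Nb => ℂ) 2,
            (∀ (ℓ k : Λ) (a b : Fin Nb),
              ‖entry R (ℓ, a) (k, b)‖ ≤ (2 / 𝔡) * Real.exp (-γ * dist (y ℓ) (y k))) →
            (∀ (ℓ k : Λ) (a b : Fin Nb),
              ‖entry B₁ (ℓ, a) (k, b)‖ ≤
                c₁ * Real.exp (-γ₁ * (dist (y ℓ) (y m₁) + dist (y m₁) (y k)))) →
            (∀ (ℓ k : Λ) (a b : Fin Nb),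
              ‖entry B₂ (ℓ, a) (k, b)‖ ≤
                c₁ * Real.exp (-γ₁ * (dist (y ℓ) (y m₂) + dist (y m₂) (y k)))) →
            ∀ (ℓ : Λ) (a : Fin Nb),
              ‖entry (R ∘L B₁ ∘L R ∘L B₂ ∘L R) (ℓ, a) (ℓ, a)‖ ≤
                C * 𝔡⁻¹ ^ 3 * (1 + (min γ γ₁)⁻¹ ^ (8 * d)) *
                  Real.exp (-(min γ γ₁ / 4) *
                    (dist (y ℓ) (y m₁) + dist (y ℓ) (y m₂))) := by
  set K : ℝ := Nb * (1 + 2 / 𝔪) ^ d * (d !)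
  have hK : 0 < K := by
    have : (0 : ℝ) < Nb := by exact_mod_cast hNb
    positivity
  refine ⟨8 * c₁ ^ 2 * K ^ 4 * 2 ^ (8 * (d + 1)), by positivity, ?_⟩
  intro Λ _ _ y hsep m₁ m₂ 𝔡 γ γ₁ h𝔡 hγ hγ₁ R B₁ B₂ hR hB₁ hB₂ ℓ a
  set η := min γ γ₁
  have hη : 0 < η := lt_min hγ hγ₁
  have hM : ∀ x (F : Finset (Λ × Fin Nb)),
      ∑ p ∈ F, exp (-(η / 2) * dist x (y p.1)) ≤ K * (1 + (η / 2)⁻¹) ^ (d + 1) := fun x F => by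
    simpa [finrank_euclideanSpace_fin, K] using
      sum_exp_neg_dist_le_of_separated h𝔪 hsep x (half_pos hη) F
  calc _ ≤ c₁ ^ 2 * (2 / 𝔡) ^ 3 * (K * (1 + (η / 2)⁻¹) ^ (d + 1)) ^ 4
        * exp (-(η / 2) * (dist (y ℓ) (y m₁) + dist (y ℓ) (y m₂))) :=
      norm_entry_RBRBR_le (fun p : Λ × Fin Nb => y p.1) hη.le (min_le_left _ _)
        (min_le_right _ _) hM (fun i k => hR i.1 k.1 i.2 k.2) (fun i k => hB₁ i.1 k.1 i.2 k.2)
        (fun i k => hB₂ i.1 k.1 i.2 k.2) (ℓ, a)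
    _ = 8 * c₁ ^ 2 * K ^ 4 * 𝔡⁻¹ ^ 3 * ((1 + (η / 2)⁻¹) ^ (d + 1)) ^ 4
        * exp (-(η / 2) * (dist (y ℓ) (y m₁) + dist (y ℓ) (y m₂))) := by ring
    _ ≤ 8 * c₁ ^ 2 * K ^ 4 * 𝔡⁻¹ ^ 3 * (2 ^ (8 * (d + 1)) * (1 + η⁻¹ ^ (8 * d)))
        * exp (-(η / 4) * (dist (y ℓ) (y m₁) + dist (y ℓ) (y m₂))) := by
      have := add_nonneg (dist_nonneg : 0 ≤ dist (y ℓ) (y m₁)) (dist_nonneg : 0 ≤ dist (y ℓ) (y m₂))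
      gcongr 8 * c₁ ^ 2 * K ^ 4 * 𝔡⁻¹ ^ 3 * ?_ * exp ?_
      · exact one_add_inv_half_pow_le hη hd
      · nlinarith
    _ = _ := by ring
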